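/- The translation tr₃ from L_PAKC to L′_PAKC, defined by the clauses tr₃(Y=y) = []Y=y; tr₃(¬χ) = ¬tr₃(χ); tr₃(χ₁∧χ₂) = tr₃(χ₁)∧tr₃(χ₂); tr₃(Kχ) = K tr₃(χ); tr₃([α!]χ) = [tr₃(α)!]tr₃(χ); tr₃([X⃗:=x⃗]Y=y) = [X⃗:=x⃗]Y=y; tr₃([X⃗:=x⃗]¬χ) = tr₃(¬[X⃗:=x⃗]χ); tr₃([X⃗:=x⃗](χ₁∧χ₂)) = tr₃([X⃗:=x⃗]χ₁ ∧ [X⃗:=x⃗]χ₂); tr₃([X⃗:=x⃗]Kχ) = tr₃(K[X⃗:=x⃗]χ); tr₃([X⃗:=x⃗][α!]Y=y) = tr₃([X⃗:=x⃗](α → Y=y)); tr₃([X⃗:=x⃗][α!]¬χ) = tr₃([X⃗:=x⃗](α → ¬[α!]χ)); tr₃([X⃗:=x⃗][α!](χ₁∧χ₂)) = tr₃([X⃗:=x⃗]([α!]χ₁ ∧ [α!]χ₂)); tr₃([X⃗:=x⃗][α!]Kχ) = tr₃([X⃗:=x⃗](α → K(α → [α!]χ))); tr₃([X⃗:=x⃗][α₁!][α₂!]χ)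 = tr₃([X⃗:=x⃗][α₁ ∧ [α₁!]α₂ !]χ); tr₃([X⃗:=x⃗][α!][Y⃗:=y⃗]χ) = tr₃([[X⃗:=x⃗]α !][X⃗′:=x⃗′, Y⃗:=y⃗]χ); tr₃([X⃗:=x⃗][Y⃗:=y⃗]χ) = tr₃([X⃗′:=x⃗′, Y⃗:=y⃗]χ), with X⃗′ = X⃗ \ Y⃗, is well defined and satisfies, for every L_PAKC formula χ: (1) tr₃(χ) ∈ L′_PAKC; (2) χ ↔ tr₃(χ) is provable in the system L_PAKC; (3) χ ↔ tr₃(χ) is valid over epistemic recursive causal models. -/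

import Mathlib

open Classical

/-- A finite signature: variables sorted into exogenous and endogenous, each with a
finite nonempty range of values. -/
structure Sig : Type 1 where
  Var : Type
  exo : Var → Prop
  Val : Var → Type
  [decEqVar : DecidableEq Var]
  [finVar : Fintype Var]
  [neVar : Nonempty Var]
  [decEqVal : ∀ X : Var, DecidableEq (Val X)]
  [finVal : ∀ X : Var, Fintype (Val X)]
  [neVal : ∀ X : Var, Nonempty (Val X)]

attribute [instance] Sig.decEqVar Sig.finVar Sig.neVar Sig.decEqVal Sig.finVal Sig.neVal

variable {S : Sig}

/-- A valuation: a value for each variable. -/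
abbrev Env (S : Sig) : Type := ∀ X : S.Var, S.Val X

instance : Nonempty (Env S) := ⟨fun X => Classical.arbitrary (S.Val X)⟩

/-- Values for all variables other than `V`. -/
abbrev Others (S : Sig) (V : S.Var) : Type := ∀ X : {X : S.Var // X ≠ V}, S.Val X.val

/-- The restriction of a valuation to the variables other than `V`. -/
def Env.restrict (A : Env S) (V : S.Var) : Others S V := fun X => A X.val

/-- A family of structural functions (only the components at endogenous variables
are meaningful). -/
abbrev StructFuns (S : Sig) : Type := ∀ V : S.Var, Others S V → S.Val V

/-- A valuation complies with the structural functions: the value of each endogenous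
variable is obtained by applying its structural function to the values of all
other variables. -/
def Complies (F : StructFuns S) (A : Env S) : Prop :=
  ∀ V : S.Var, ¬ S.exo V → A V = F V (A.restrict V)

/-- The endogenous variable `V` is directly causally affected by `X` under `F`. -/
def DirAff (F : StructFuns S) (X V : S.Var) : Prop :=
  ¬ S.exo V ∧ ∃ (h : X ≠ V) (g : Others S V) (x₁ x₂ : S.Val X),
    x₁ ≠ x₂ ∧
      F V (Function.update g ⟨X, h⟩ x₁) ≠ F V (Function.update g ⟨X, h⟩ x₂)

/-- `F` is recursive: the transitive closure of the direct causal dependence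
relation is asymmetric (transitivity is automatic for `Relation.TransGen`). -/
def RecursiveF (F : StructFuns S) : Prop :=
  ∀ a b : S.Var, Relation.TransGen (DirAff F) a b → ¬ Relation.TransGen (DirAff F) b a

/-- An assignment of values to a set of pairwise distinct variables. -/
abbrev Intervention (S : Sig) : Type := ∀ X : S.Var, Option (S.Val X)

/-- The empty assignment. -/
def iEmpty (S : Sig) : Intervention S := fun _ => none

/-- Extend an assignment by additionally setting `Y` to `y` (overriding). -/
def iUpd (I : Intervention S) (Y : S.Var) (y : S.Val Y) : Intervention S :=
  Function.update I Y (some y)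

/-- Combine assignments, the second overriding the first:  `[X⃗ := x⃗, Y⃗ := y⃗]`. -/
def icomp (I J : Intervention S) : Intervention S := fun W =>
  match J W with
  | some v => some v
  | none => I W

/-- The intervened family of structural functions: intervened variables get the
constant function returning the assigned value; the rest are unchanged. -/
def intF (F : StructFuns S) (I : Intervention S) : StructFuns S :=
  fun V g => (I V).getD (F V g)

/-- `A'` is the result of intervening with `I` on the valuation `A` (w.r.t. `F`):
exogenous intervened variables get the assigned value, exogenous non-intervened
variables keep their value, and each endogenous variable complies with its new
structural function. -/
def IntervenedVal (F : StructFuns S) (A : Env S) (I : Intervention S) (A' : Env S) : Prop :=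
  (∀ X : S.Var, S.exo X → ∀ v : S.Val X, I X = some v → A' X = v) ∧
  (∀ X : S.Var, S.exo X → I X = none → A' X = A X) ∧
  (∀ V : S.Var, ¬ S.exo V → A' V = intF F I V (A'.restrict V))

/-- The intervened valuation (unique when `F` is recursive). -/
noncomputable def intVal (F : StructFuns S) (A : Env S) (I : Intervention S) : Env S :=
  Classical.epsilon (IntervenedVal F A I)

/-- The language L_PAKC: atoms `Y = y`, negation, conjunction, knowledge,
public announcements, and interventionist counterfactual operators. -/
inductive Form (S : Sig) : Type where
  | eq (Y : S.Var) (y : S.Val Y) : Form S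
  | neg (φ : Form S) : Form S
  | conj (φ ψ : Form S) : Form S
  | know (φ : Form S) : Form S
  | ann (α φ : Form S) : Form S
  | int (I : Intervention S) (φ : Form S) : Form S

namespace Form

/-- Material implication, defined from `¬` and `∧` as usual. -/
def impl (φ ψ : Form S) : Form S := Form.neg (Form.conj φ (Form.neg ψ))

/-- Disjunction, defined from `¬` and `∧` as usual. -/
def orF (φ ψ : Form S) : Form S := Form.neg (Form.conj (Form.neg φ) (Form.neg ψ))

/-- Biconditional. -/
def iffF (φ ψ : Form S) : Form S := Form.conj (impl φ ψ) (impl ψ φ)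

end Form

/-- A canonical contradiction. -/
noncomputable def botF (S : Sig) : Form S :=
  let X : S.Var := Classical.arbitrary S.Var
  let x : S.Val X := Classical.arbitrary (S.Val X)
  Form.conj (Form.eq X x) (Form.neg (Form.eq X x))

/-- A canonical tautology. -/
noncomputable def topF (S : Sig) : Form S := Form.neg (botF S)

/-- Disjunction of a list of formulas (the empty disjunction is a contradiction). -/
noncomputable def bigOr : List (Form S) → Form S
  | [] => botF S
  | φ :: l => l.foldl Form.orF φ

/-- Conjunction of a list of formulas (the empty conjunction is a tautology). -/
noncomputable def bigConj : List (Form S) → Form S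
  | [] => topF S
  | φ :: l => l.foldl Form.conj φ

/-- `φ` is an instance of a propositional tautology: it evaluates to `true` under
every Boolean valuation that respects negation and conjunction (treating all
other formulas as atoms). -/
def Tauto (φ : Form S) : Prop :=
  ∀ v : Form S → Bool,
    (∀ ψ : Form S, v (Form.neg ψ) = !(v ψ)) →
    (∀ ψ χ : Form S, v (Form.conj ψ χ) = (v ψ && v χ)) →
    v φ = true

/-- The assignment `[Z⃗ := z⃗, X := x]` where `Z⃗` lists all variables other than
`X` and `V`, used in the formula `X ⇝ V`. -/
def ltInt (X V : S.Var) (g : ∀ W : {W : S.Var // W ≠ X ∧ W ≠ V}, S.Val W.val)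
    (x : S.Val X) : Intervention S := fun W =>
  if h : W = X then some (h.symm ▸ x)
  else if h' : W = V then none
  else some (g ⟨W, ⟨h, h'⟩⟩)

/-- The formula `X ⇝ V`: the disjunction, over tuples `z⃗` of values for all
variables other than `X` and `V`, distinct values `x₁ ≠ x₂` of `X` and distinct
values `v₁ ≠ v₂` of `V`, of `[Z⃗:=z⃗, X:=x₁]V=v₁ ∧ [Z⃗:=z⃗, X:=x₂]V=v₂`. -/
noncomputable def leadsTo (X V : S.Var) : Form S :=
  bigOr ((Finset.univ.filter
      (fun p : (∀ W : {W : S.Var // W ≠ X ∧ W ≠ V}, S.Val W.val) ×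
          (S.Val X × S.Val X) × (S.Val V × S.Val V) =>
        p.2.1.1 ≠ p.2.1.2 ∧ p.2.2.1 ≠ p.2.2.2)).toList.map
    (fun p =>
      Form.conj
        (Form.int (ltInt X V p.1 p.2.1.1) (Form.eq V p.2.2.1))
        (Form.int (ltInt X V p.1 p.2.1.2) (Form.eq V p.2.2.2))))

/-- The chain `X₀ ⇝ X₁ ∧ ⋯ ∧ X_k ⇝ X_{k+1}`. -/
noncomputable def chainConj (X : ℕ → S.Var) : ℕ → Form S
  | 0 => leadsTo (X 0) (X 1)
  | n + 1 => Form.conj (chainConj X n) (leadsTo (X (n + 1)) (X (n + 2)))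

/-- `ψ₁ → (ψ₂ → ⋯ → (ψₙ → φ))` for a list of premises. -/
def impsFrom : List (Form S) → Form S → Form S
  | [], φ => φ
  | ψ :: l, φ => Form.impl ψ (impsFrom l φ)

/-- Satisfaction of an L_PAKC formula at a pointed epistemic causal model
`(⟨F, T⟩, A)` (the semantics `⊨ᵂ`, without observables). -/
def SatW : Form S → StructFuns S → Set (Env S) → Env S → Prop
  | Form.eq Y y, _, _, A => A Y = y
  | Form.neg φ, F, T, A => ¬ SatW φ F T A
  | Form.conj φ ψ, F, T, A => SatW φ F T A ∧ SatW ψ F T A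
  | Form.know φ, F, T, _ => ∀ B ∈ T, SatW φ F T B
  | Form.ann α φ, F, T, A =>
      SatW α F T A → SatW φ F {B | B ∈ T ∧ SatW α F T B} A
  | Form.int I φ, F, T, A =>
      SatW φ (intF F I) ((fun B => intVal F B I) '' T) (intVal F A I)

/-- The proof system L_PAKC: the system L_KC extended with necessitation for
interventions, the announcement reduction axioms and rules, and the commutation
axiom (=_!). -/
inductive ThmPAKC : Form S → Prop where
  | taut : ∀ {φ : Form S}, Tauto φ → ThmPAKC φ
  | mp : ∀ {φ ψ : Form S}, ThmPAKC (Form.impl φ ψ) → ThmPAKC φ → ThmPAKC ψ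
  | a1 : ∀ (I : Intervention S) (Y : S.Var) (y y' : S.Val Y), y ≠ y' →
      ThmPAKC (Form.impl (Form.int I (Form.eq Y y)) (Form.neg (Form.int I (Form.eq Y y'))))
  | a2 : ∀ (I : Intervention S) (Y : S.Var),
      ThmPAKC (bigOr (((Finset.univ : Finset (S.Val Y)).toList).map
        (fun y => Form.int I (Form.eq Y y))))
  | a3 : ∀ (I : Intervention S) (Y Z : S.Var) (y : S.Val Y) (z : S.Val Z),
      ThmPAKC (Form.impl (Form.conj (Form.int I (Form.eq Y y)) (Form.int I (Form.eq Z z)))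
        (Form.int (iUpd I Y y) (Form.eq Z z)))
  | a4 : ∀ (I : Intervention S) (Y : S.Var) (y : S.Val Y),
      ThmPAKC (Form.int (iUpd I Y y) (Form.eq Y y))
  | a5 : ∀ (I : Intervention S) (Y Z : S.Var) (y : S.Val Y) (z : S.Val Z), Y ≠ Z →
      ThmPAKC (Form.impl
        (Form.conj (Form.int (iUpd I Y y) (Form.eq Z z)) (Form.int (iUpd I Z z) (Form.eq Y y)))
        (Form.int I (Form.eq Z z)))
  | a6 : ∀ (X : ℕ → S.Var) (k : ℕ),
      (∀ i : ℕ, i ≤ k → X i ≠ X (i + 1)) → X (k + 1) ≠ X 0 →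
      ThmPAKC (Form.impl (chainConj X k) (Form.neg (leadsTo (X (k + 1)) (X 0))))
  | a7 : ∀ (I : Intervention S) (U : S.Var) (u : S.Val U), S.exo U → I U = none →
      ThmPAKC (Form.iffF (Form.int (iEmpty S) (Form.eq U u)) (Form.int I (Form.eq U u)))
  | aEmpty : ∀ (Y : S.Var) (y : S.Val Y),
      ThmPAKC (Form.iffF (Form.eq Y y) (Form.int (iEmpty S) (Form.eq Y y)))
  | aNeg : ∀ (I : Intervention S) (φ : Form S),
      ThmPAKC (Form.iffF (Form.int I (Form.neg φ)) (Form.neg (Form.int I φ)))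
  | aConj : ∀ (I : Intervention S) (φ ψ : Form S),
      ThmPAKC (Form.iffF (Form.int I (Form.conj φ ψ))
        (Form.conj (Form.int I φ) (Form.int I ψ)))
  | aIntInt : ∀ (I J : Intervention S) (φ : Form S),
      ThmPAKC (Form.iffF (Form.int I (Form.int J φ)) (Form.int (icomp I J) φ))
  | axK : ∀ (φ ψ : Form S),
      ThmPAKC (Form.impl (Form.know (Form.impl φ ψ))
        (Form.impl (Form.know φ) (Form.know ψ)))
  | necK : ∀ {φ : Form S}, ThmPAKC φ → ThmPAKC (Form.know φ)
  | axT : ∀ (φ : Form S), ThmPAKC (Form.impl (Form.know φ) φ)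
  | ax4 : ∀ (φ : Form S), ThmPAKC (Form.impl (Form.know φ) (Form.know (Form.know φ)))
  | ax5 : ∀ (φ : Form S),
      ThmPAKC (Form.impl (Form.neg (Form.know φ)) (Form.know (Form.neg (Form.know φ))))
  | cm : ∀ (I : Intervention S) (φ : Form S),
      ThmPAKC (Form.iffF (Form.int I (Form.know φ)) (Form.know (Form.int I φ)))
  | kl : ∀ (I : Intervention S) (Y : S.Var) (y : S.Val Y), ¬ S.exo Y →
      (∀ W : S.Var, (I W).isSome ↔ W ≠ Y) →
      ThmPAKC (Form.impl (Form.int I (Form.eq Y y))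
        (Form.know (Form.int I (Form.eq Y y))))
  | necInt : ∀ {φ : Form S} (I : Intervention S), ThmPAKC φ → ThmPAKC (Form.int I φ)
  | annEq : ∀ (α : Form S) (I : Intervention S) (Y : S.Var) (y : S.Val Y),
      ThmPAKC (Form.iffF (Form.ann α (Form.int I (Form.eq Y y)))
        (Form.impl α (Form.int I (Form.eq Y y))))
  | annNeg : ∀ (α φ : Form S),
      ThmPAKC (Form.iffF (Form.ann α (Form.neg φ))
        (Form.impl α (Form.neg (Form.ann α φ))))
  | annConj : ∀ (α φ ψ : Form S),
      ThmPAKC (Form.iffF (Form.ann α (Form.conj φ ψ))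
        (Form.conj (Form.ann α φ) (Form.ann α ψ)))
  | annKnow : ∀ (α φ : Form S),
      ThmPAKC (Form.iffF (Form.ann α (Form.know φ))
        (Form.impl α (Form.know (Form.impl α (Form.ann α φ)))))
  | annAnn : ∀ (α β φ : Form S),
      ThmPAKC (Form.iffF (Form.ann α (Form.ann β φ))
        (Form.ann (Form.conj α (Form.ann α β)) φ))
  | kAnn : ∀ (α φ ψ : Form S),
      ThmPAKC (Form.impl (Form.ann α (Form.impl φ ψ))
        (Form.impl (Form.ann α φ) (Form.ann α ψ)))
  | necAnn : ∀ {φ : Form S} (α : Form S), ThmPAKC φ → ThmPAKC (Form.ann α φ)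
  | reAnn : ∀ {α β : Form S} (φ : Form S), ThmPAKC (Form.iffF α β) →
      ThmPAKC (Form.iffF (Form.ann α φ) (Form.ann β φ))
  | intAnn : ∀ (I : Intervention S) (α φ : Form S),
      ThmPAKC (Form.iffF (Form.int I (Form.ann α φ))
        (Form.ann (Form.int I α) (Form.int I φ)))

/-- Strong derivability from a set of premises in L_PAKC. -/
def ProvPAKC (Γ : Set (Form S)) (φ : Form S) : Prop :=
  ∃ l : List (Form S), (∀ ψ ∈ l, ψ ∈ Γ) ∧ ThmPAKC (impsFrom l φ)

/-- The language L′_PAKC: formulas generated from `[X⃗:=x⃗]Y=y` by `¬`, `∧`, `K`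
and announcement operators. -/
inductive IsPAKC' : Form S → Prop where
  | intEq : ∀ (I : Intervention S) (Y : S.Var) (y : S.Val Y),
      IsPAKC' (Form.int I (Form.eq Y y))
  | neg : ∀ {φ : Form S}, IsPAKC' φ → IsPAKC' (Form.neg φ)
  | conj : ∀ {φ ψ : Form S}, IsPAKC' φ → IsPAKC' ψ → IsPAKC' (Form.conj φ ψ)
  | know : ∀ {φ : Form S}, IsPAKC' φ → IsPAKC' (Form.know φ)
  | ann : ∀ {α φ : Form S}, IsPAKC' α → IsPAKC' φ → IsPAKC' (Form.ann α φ)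

/-- The translation tr₃ from L_PAKC to L′_PAKC, given as a relation defined by
the recursive clauses of the definition (the theorem below asserts that it is
well defined, i.e. total and functional). -/
inductive Tr3 : Form S → Form S → Prop where
  | eq : ∀ (Y : S.Var) (y : S.Val Y),
      Tr3 (Form.eq Y y) (Form.int (iEmpty S) (Form.eq Y y))
  | neg : ∀ {φ φ' : Form S}, Tr3 φ φ' → Tr3 (Form.neg φ) (Form.neg φ')
  | conj : ∀ {φ φ' ψ ψ' : Form S}, Tr3 φ φ' → Tr3 ψ ψ' →
      Tr3 (Form.conj φ ψ) (Form.conj φ' ψ')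
  | know : ∀ {φ φ' : Form S}, Tr3 φ φ' → Tr3 (Form.know φ) (Form.know φ')
  | ann : ∀ {α α' φ φ' : Form S}, Tr3 α α' → Tr3 φ φ' →
      Tr3 (Form.ann α φ) (Form.ann α' φ')
  | intEq : ∀ (I : Intervention S) (Y : S.Var) (y : S.Val Y),
      Tr3 (Form.int I (Form.eq Y y)) (Form.int I (Form.eq Y y))
  | intNeg : ∀ {I : Intervention S} {φ χ : Form S},
      Tr3 (Form.neg (Form.int I φ)) χ → Tr3 (Form.int I (Form.neg φ)) χ
  | intConj : ∀ {I : Intervention S} {φ ψ χ : Form S},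
      Tr3 (Form.conj (Form.int I φ) (Form.int I ψ)) χ →
      Tr3 (Form.int I (Form.conj φ ψ)) χ
  | intKnow : ∀ {I : Intervention S} {φ χ : Form S},
      Tr3 (Form.know (Form.int I φ)) χ → Tr3 (Form.int I (Form.know φ)) χ
  | intAnnEq : ∀ {I : Intervention S} {α χ : Form S} (Y : S.Var) (y : S.Val Y),
      Tr3 (Form.int I (Form.impl α (Form.eq Y y))) χ →
      Tr3 (Form.int I (Form.ann α (Form.eq Y y))) χ
  | intAnnNeg : ∀ {I : Intervention S} {α φ χ : Form S},
      Tr3 (Form.int I (Form.impl α (Form.neg (Form.ann α φ)))) χ →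
      Tr3 (Form.int I (Form.ann α (Form.neg φ))) χ
  | intAnnConj : ∀ {I : Intervention S} {α φ ψ χ : Form S},
      Tr3 (Form.int I (Form.conj (Form.ann α φ) (Form.ann α ψ))) χ →
      Tr3 (Form.int I (Form.ann α (Form.conj φ ψ))) χ
  | intAnnKnow : ∀ {I : Intervention S} {α φ χ : Form S},
      Tr3 (Form.int I (Form.impl α (Form.know (Form.impl α (Form.ann α φ))))) χ →
      Tr3 (Form.int I (Form.ann α (Form.know φ))) χ
  | intAnnAnn : ∀ {I : Intervention S} {α β φ χ : Form S},
      Tr3 (Form.int I (Form.ann (Form.conj α (Form.ann α β)) φ)) χ →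
      Tr3 (Form.int I (Form.ann α (Form.ann β φ))) χ
  | intAnnInt : ∀ {I J : Intervention S} {α φ χ : Form S},
      Tr3 (Form.ann (Form.int I α) (Form.int (icomp I J) φ)) χ →
      Tr3 (Form.int I (Form.ann α (Form.int J φ))) χ
  | intInt : ∀ {I J : Intervention S} {φ χ : Form S},
      Tr3 (Form.int (icomp I J) φ) χ → Tr3 (Form.int I (Form.int J φ)) χ

/-! The clauses of tr₃ are syntax-directed, so `Tr3` is the graph of a function defined by
well-founded recursion on a complexity measure that every clause decreases. Each clause replaces
a formula, inside a context built from ¬, ∧, K, announcements and interventions, by one that is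
equivalent to it by a reduction axiom of L_PAKC (or by `Y=y ↔ []Y=y`). Hence `χ` and `tr₃(χ)`
are related by every equivalence relation that is a congruence for these operators and contains
the reduction axioms. Provable equivalence is such a relation by the rules of the system; so is
validity over recursive models, because recursive structural functions determine a unique
intervened valuation, which makes interventions compose and the empty intervention trivial. -/

namespace Form

/-- Every clause of `tr3` decreases it: the factor `2 c(α) + 10` pays for the copies of `α` made
by the announcement clauses. -/
def complexity : Form S → ℕ
  | eq _ _ => 0
  | neg φ => φ.complexity + 1
  | conj φ ψ => φ.complexity + ψ.complexity + 2
  | know φ => φ.complexity + 1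
  | ann α φ => (2 * α.complexity + 10) * (φ.complexity + 1)
  | int _ φ => 2 * φ.complexity + 1

end Form

open Form

def tr3 : Form S → Form S
  | eq Y y => int (iEmpty S) (eq Y y)
  | neg φ => neg (tr3 φ)
  | conj φ ψ => conj (tr3 φ) (tr3 ψ)
  | know φ => know (tr3 φ)
  | ann α φ => ann (tr3 α) (tr3 φ)
  | int I (eq Y y) => int I (eq Y y)
  | int I (neg φ) => tr3 (neg (int I φ))
  | int I (conj φ ψ) => tr3 (conj (int I φ) (int I ψ))
  | int I (know φ) => tr3 (know (int I φ))
  | int I (ann α (eq Y y)) => tr3 (int I (α.impl (eq Y y)))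
  | int I (ann α (neg φ)) => tr3 (int I (α.impl (neg (ann α φ))))
  | int I (ann α (conj φ ψ)) => tr3 (int I (conj (ann α φ) (ann α ψ)))
  | int I (ann α (know φ)) => tr3 (int I (α.impl (know (α.impl (ann α φ)))))
  | int I (ann α (ann β φ)) => tr3 (int I (ann (conj α (ann α β)) φ))
  | int I (ann α (int J φ)) => tr3 (ann (int I α) (int (icomp I J) φ))
  | int I (int J φ) => tr3 (int (icomp I J) φ)
termination_by φ => φ.complexity
decreasing_by all_goals simp only [Form.complexity, Form.impl]; ring_nf; omega

theorem tr3_spec (χ : Form S) : Tr3 χ (tr3 χ) := by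
  fun_induction tr3 χ <;> constructor <;> assumption

theorem Tr3.eq_tr3 {χ χ' : Form S} (h : Tr3 χ χ') : χ' = tr3 χ := by
  induction h <;> rw [tr3] <;> simp only [*]

theorem isPAKC'_tr3 (χ : Form S) : IsPAKC' (tr3 χ) := by
  fun_induction tr3 χ <;> first | assumption | constructor <;> assumption

structure IsReductionCongruence (R : Form S → Form S → Prop) : Prop extends Equivalence R where
  neg_congr {φ ψ : Form S} : R φ ψ → R (neg φ) (neg ψ)
  conj_congr {φ φ' ψ ψ' : Form S} : R φ φ' → R ψ ψ' → R (conj φ ψ) (conj φ' ψ')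
  know_congr {φ ψ : Form S} : R φ ψ → R (know φ) (know ψ)
  ann_congr {α α' φ φ' : Form S} : R α α' → R φ φ' → R (ann α φ) (ann α' φ')
  int_congr (I : Intervention S) {φ ψ : Form S} : R φ ψ → R (int I φ) (int I ψ)
  eq_empty (Y : S.Var) (y : S.Val Y) : R (eq Y y) (int (iEmpty S) (eq Y y))
  int_neg (I : Intervention S) (φ : Form S) : R (int I (neg φ)) (neg (int I φ))
  int_conj (I : Intervention S) (φ ψ : Form S) :
    R (int I (conj φ ψ)) (conj (int I φ) (int I ψ))
  int_know (I : Intervention S) (φ : Form S) : R (int I (know φ)) (know (int I φ))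
  int_int (I J : Intervention S) (φ : Form S) : R (int I (int J φ)) (int (icomp I J) φ)
  ann_intEq (α : Form S) (I : Intervention S) (Y : S.Var) (y : S.Val Y) :
    R (ann α (int I (eq Y y))) (α.impl (int I (eq Y y)))
  ann_neg (α φ : Form S) : R (ann α (neg φ)) (α.impl (neg (ann α φ)))
  ann_conj (α φ ψ : Form S) : R (ann α (conj φ ψ)) (conj (ann α φ) (ann α ψ))
  ann_know (α φ : Form S) : R (ann α (know φ)) (α.impl (know (α.impl (ann α φ))))
  ann_ann (α β φ : Form S) : R (ann α (ann β φ)) (ann (conj α (ann α β)) φ)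
  int_ann (I : Intervention S) (α φ : Form S) : R (int I (ann α φ)) (ann (int I α) (int I φ))

namespace IsReductionCongruence

variable {R : Form S → Form S → Prop}

theorem impl_congr (hR : IsReductionCongruence R) {φ φ' ψ ψ' : Form S} (hφ : R φ φ')
    (hψ : R ψ ψ') :
    R (φ.impl ψ) (φ'.impl ψ') :=
  hR.neg_congr (hR.conj_congr hφ (hR.neg_congr hψ))

theorem ann_eq (hR : IsReductionCongruence R) (α : Form S) (Y : S.Var) (y : S.Val Y) :
    R (ann α (eq Y y)) (α.impl (eq Y y)) :=
  have hα := hR.refl α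
  have hY := hR.eq_empty Y y
  hR.trans (hR.ann_congr hα hY)
    (hR.trans (hR.ann_intEq α _ Y y) (hR.impl_congr hα (hR.symm hY)))

theorem rel_tr3 (hR : IsReductionCongruence R) (χ : Form S) : R χ (tr3 χ) := by
  fun_induction tr3 χ with
  | case1 Y y => exact hR.eq_empty Y y
  | case2 φ ih => exact hR.neg_congr ih
  | case3 φ ψ ihφ ihψ => exact hR.conj_congr ihφ ihψ
  | case4 φ ih => exact hR.know_congr ih
  | case5 α φ ihα ihφ => exact hR.ann_congr ihα ihφ
  | case6 I Y y => exact hR.refl _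
  | case7 I φ ih => exact hR.trans (hR.int_neg I φ) ih
  | case8 I φ ψ ih => exact hR.trans (hR.int_conj I φ ψ) ih
  | case9 I φ ih => exact hR.trans (hR.int_know I φ) ih
  | case10 I α Y y ih => exact hR.trans (hR.int_congr I (hR.ann_eq α Y y)) ih
  | case11 I α φ ih => exact hR.trans (hR.int_congr I (hR.ann_neg α φ)) ih
  | case12 I α φ ψ ih => exact hR.trans (hR.int_congr I (hR.ann_conj α φ ψ)) ih
  | case13 I α φ ih => exact hR.trans (hR.int_congr I (hR.ann_know α φ)) ih
  | case14 I α β φ ih => exact hR.trans (hR.int_congr I (hR.ann_ann α β φ)) ih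
  | case15 I α J φ ih =>
    exact hR.trans (hR.trans (hR.int_ann I α _)
      (hR.ann_congr (hR.refl _) (hR.int_int I J φ))) ih
  | case16 I J φ ih => exact hR.trans (hR.int_int I J φ) ih

end IsReductionCongruence

namespace ThmPAKC

theorem mp_of_tauto {φ ψ : Form S} (h : Tauto (φ.impl ψ)) (hφ : ThmPAKC φ) : ThmPAKC ψ :=
  mp (taut h) hφ

theorem mp₂_of_tauto {φ ψ χ : Form S} (h : Tauto (φ.impl (ψ.impl χ))) (hφ : ThmPAKC φ)
    (hψ : ThmPAKC ψ) : ThmPAKC χ :=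
  mp (mp (taut h) hφ) hψ

theorem iff_refl (φ : Form S) : ThmPAKC (φ.iffF φ) :=
  taut fun v hn hc => by
    simp only [Form.iffF, Form.impl, hn, hc]; cases v φ <;> rfl

theorem iff_symm {φ ψ : Form S} (h : ThmPAKC (φ.iffF ψ)) : ThmPAKC (ψ.iffF φ) :=
  mp_of_tauto (fun v hn hc => by
    simp only [Form.iffF, Form.impl, hn, hc]; cases v φ <;> cases v ψ <;> rfl) h

theorem iff_trans {φ ψ χ : Form S} (h₁ : ThmPAKC (φ.iffF ψ)) (h₂ : ThmPAKC (ψ.iffF χ)) :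
    ThmPAKC (φ.iffF χ) :=
  mp₂_of_tauto (fun v hn hc => by
    simp only [Form.iffF, Form.impl, hn, hc]
    cases v φ <;> cases v ψ <;> cases v χ <;> rfl) h₁ h₂

theorem imp_of_iff {φ ψ : Form S} (h : ThmPAKC (φ.iffF ψ)) : ThmPAKC (φ.impl ψ) :=
  mp_of_tauto (fun v hn hc => by
    simp only [Form.iffF, Form.impl, hn, hc]; cases v φ <;> cases v ψ <;> rfl) h

theorem iff_of_imp {φ ψ : Form S} (h₁ : ThmPAKC (φ.impl ψ)) (h₂ : ThmPAKC (ψ.impl φ)) :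
    ThmPAKC (φ.iffF ψ) :=
  mp₂_of_tauto (fun v hn hc => by
    simp only [Form.iffF, Form.impl, hn, hc]; cases v φ <;> cases v ψ <;> rfl) h₁ h₂

theorem neg_congr {φ ψ : Form S} (h : ThmPAKC (φ.iffF ψ)) :
    ThmPAKC ((Form.neg φ).iffF (Form.neg ψ)) :=
  mp_of_tauto (fun v hn hc => by
    simp only [Form.iffF, Form.impl, hn, hc]; cases v φ <;> cases v ψ <;> rfl) h

theorem conj_congr {φ φ' ψ ψ' : Form S} (hφ : ThmPAKC (φ.iffF φ'))
    (hψ : ThmPAKC (ψ.iffF ψ')) :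
    ThmPAKC ((Form.conj φ ψ).iffF (Form.conj φ' ψ')) :=
  mp₂_of_tauto (fun v hn hc => by
    simp only [Form.iffF, Form.impl, hn, hc]
    cases v φ <;> cases v φ' <;> cases v ψ <;> cases v ψ' <;> rfl) hφ hψ

theorem know_congr {φ ψ : Form S} (h : ThmPAKC (φ.iffF ψ)) :
    ThmPAKC ((Form.know φ).iffF (Form.know ψ)) :=
  iff_of_imp (mp (axK φ ψ) (necK (imp_of_iff h)))
    (mp (axK ψ φ) (necK (imp_of_iff (iff_symm h))))

theorem ann_congr {α α' φ ψ : Form S} (hα : ThmPAKC (α.iffF α')) (h : ThmPAKC (φ.iffF ψ)) :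
    ThmPAKC ((Form.ann α φ).iffF (Form.ann α' ψ)) :=
  iff_trans (reAnn φ hα) <| iff_of_imp (mp (kAnn α' φ ψ) (necAnn α' (imp_of_iff h)))
    (mp (kAnn α' ψ φ) (necAnn α' (imp_of_iff (iff_symm h))))

theorem int_impl (I : Intervention S) (φ ψ : Form S) :
    ThmPAKC ((Form.int I (φ.impl ψ)).iffF ((Form.int I φ).impl (Form.int I ψ))) :=
  iff_trans (aNeg I _) <| neg_congr <| iff_trans (aConj I φ _) <|
    conj_congr (iff_refl _) (aNeg I ψ)

theorem int_congr (I : Intervention S) {φ ψ : Form S} (h : ThmPAKC (φ.iffF ψ)) :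
    ThmPAKC ((Form.int I φ).iffF (Form.int I ψ)) :=
  iff_of_imp (mp (imp_of_iff (int_impl I φ ψ)) (necInt I (imp_of_iff h)))
    (mp (imp_of_iff (int_impl I ψ φ)) (necInt I (imp_of_iff (iff_symm h))))

end ThmPAKC

theorem isReductionCongruence_thmPAKC_iffF :
    IsReductionCongruence (fun φ ψ : Form S => ThmPAKC (φ.iffF ψ)) where
  refl := ThmPAKC.iff_refl
  symm := ThmPAKC.iff_symm
  trans := ThmPAKC.iff_trans
  neg_congr := ThmPAKC.neg_congr
  conj_congr := ThmPAKC.conj_congr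
  know_congr := ThmPAKC.know_congr
  ann_congr := ThmPAKC.ann_congr
  int_congr := ThmPAKC.int_congr
  eq_empty := ThmPAKC.aEmpty
  int_neg := ThmPAKC.aNeg
  int_conj := ThmPAKC.aConj
  int_know := ThmPAKC.cm
  int_int := ThmPAKC.aIntInt
  ann_intEq := ThmPAKC.annEq
  ann_neg := ThmPAKC.annNeg
  ann_conj := ThmPAKC.annConj
  ann_know := ThmPAKC.annKnow
  ann_ann := ThmPAKC.annAnn
  int_ann := ThmPAKC.intAnn

theorem Function.apply_eq_of_update_eq {ι γ : Type*} [Fintype ι] [DecidableEq ι]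
    {β : ι → Type*} (f : (∀ i, β i) → γ) {g g' : ∀ i, β i}
    (h : ∀ i, g i ≠ g' i → ∀ (k : ∀ i, β i) (x y : β i),
      f (update k i x) = f (update k i y)) :
    f g = f g' := by
  have key : ∀ s : Finset ι, f (s.piecewise g' g) = f g := by
    intro s
    induction s using Finset.induction_on with
    | empty => rw [Finset.piecewise_empty]
    | insert i s hi ih =>
      rw [Finset.piecewise_insert, ← ih]
      by_cases hgi : g i = g' i
      · rw [← hgi, ← s.piecewise_eq_of_notMem g' g hi, Function.update_eq_self]
      · conv_rhs => rw [← Function.update_eq_self i (s.piecewise g' g)]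
        exact h i hgi _ _ _
  simpa using (key Finset.univ).symm

section Semantics

variable {F : StructFuns S}

theorem structFun_eq_of_agree_on_dirAff {V : S.Var} (hV : ¬ S.exo V) {g g' : Others S V}
    (h : ∀ (W : S.Var) (hW : W ≠ V), DirAff F W V → g ⟨W, hW⟩ = g' ⟨W, hW⟩) :
    F V g = F V g' := by
  refine Function.apply_eq_of_update_eq (F V) fun ⟨W, hW⟩ hne k x y => ?_
  by_contra hxy
  exact hne (h W hW ⟨hV, hW, k, x, y, fun hxy' => hxy (hxy' ▸ rfl), hxy⟩)

theorem RecursiveF.wellFounded (hF : RecursiveF F) :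
    WellFounded (Relation.TransGen (DirAff F)) :=
  have : IsTrans S.Var (Relation.TransGen (DirAff F)) := ⟨fun _ _ _ => .trans⟩
  have : Std.Irrefl (Relation.TransGen (DirAff F)) := ⟨fun a h => hF a a h h⟩
  Finite.wellFounded_of_trans_of_irrefl _

theorem RecursiveF.intF (hF : RecursiveF F) (I : Intervention S) :
    RecursiveF (_root_.intF F I) := by
  have mono : ∀ a b, Relation.TransGen (DirAff (_root_.intF F I)) a b →
      Relation.TransGen (DirAff F) a b :=
    Relation.TransGen.mono fun X V ⟨hV, hXV, g, x₁, x₂, hx, hfx⟩ =>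
      ⟨hV, hXV, g, x₁, x₂, hx, by cases hI : I V <;> simp_all [_root_.intF]⟩
  exact fun a b hab hba => hF a b (mono a b hab) (mono b a hba)

theorem intervenedVal_unique (hF : RecursiveF F) {A : Env S} {I : Intervention S}
    {A' A'' : Env S} (h' : IntervenedVal F A I A') (h'' : IntervenedVal F A I A'') : A' = A'' := by
  funext V
  induction V using hF.wellFounded.induction with
  | _ V ih =>
    by_cases hexo : S.exo V
    · cases hI : I V with
      | none => rw [h'.2.1 V hexo hI, h''.2.1 V hexo hI]
      | some v => rw [h'.1 V hexo v hI, h''.1 V hexo v hI]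
    · rw [h'.2.2 V hexo, h''.2.2 V hexo]
      simp only [intF]
      cases I V with
      | some v => rfl
      | none => exact structFun_eq_of_agree_on_dirAff hexo fun W _ hW => ih W (.single hW)

theorem exists_intervenedVal (hF : RecursiveF F) (A : Env S) (I : Intervention S) :
    ∃ A', IntervenedVal F A I A' := by
  let r := Relation.TransGen (DirAff F)
  -- the default `Classical.arbitrary` is never consulted: `F V` only reads the direct causes of `V`
  let step : ∀ V, (∀ W, r W V → S.Val W) → S.Val V := fun V prev =>
    if S.exo V then (I V).getD (A V)
    else (I V).getD (F V fun W => if h : r W.1 V then prev W.1 h else Classical.arbitrary _)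
  let A' : Env S := hF.wellFounded.fix step
  have hA' : ∀ V, A' V = step V fun W _ => A' W := hF.wellFounded.fix_eq step
  refine ⟨A', fun X hX v hv => ?_, fun X hX hv => ?_, fun V hV => ?_⟩
  · simp [hA' X, step, hX, hv]
  · simp [hA' X, step, hX, hv]
  · rw [hA' V]
    simp only [step, hV, if_false, intF]
    cases I V with
    | some v => rfl
    | none =>
      refine structFun_eq_of_agree_on_dirAff hV fun W hW hdir => ?_
      have : r W V := .single hdir
      simp [Env.restrict, this]

theorem intervenedVal_intVal (hF : RecursiveF F) (A : Env S) (I : Intervention S) :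
    IntervenedVal F A I (intVal F A I) :=
  Classical.epsilon_spec (exists_intervenedVal hF A I)

theorem intVal_eq (hF : RecursiveF F) {A A' : Env S} {I : Intervention S}
    (h : IntervenedVal F A I A') : intVal F A I = A' :=
  intervenedVal_unique hF (intervenedVal_intVal hF A I) h

theorem complies_intVal (hF : RecursiveF F) (A : Env S) (I : Intervention S) :
    Complies (intF F I) (intVal F A I) :=
  (intervenedVal_intVal hF A I).2.2

theorem intVal_iEmpty (hF : RecursiveF F) {A : Env S} (hA : Complies F A) :
    intVal F A (iEmpty S) = A :=
  intVal_eq hF ⟨fun _ _ _ h => by simp [iEmpty] at h, fun _ _ _ => rfl, hA⟩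

theorem intF_icomp (I J : Intervention S) : intF (intF F I) J = intF F (icomp I J) := by
  funext V g
  simp only [intF, icomp]
  cases J V <;> rfl

theorem intVal_icomp (hF : RecursiveF F) (A : Env S) (I J : Intervention S) :
    intVal (intF F I) (intVal F A I) J = intVal F A (icomp I J) := by
  obtain ⟨hI₁, hI₂, -⟩ := intervenedVal_intVal hF A I
  obtain ⟨hJ₁, hJ₂, hJ₃⟩ := intervenedVal_intVal (hF.intF I) (intVal F A I) J
  refine (intVal_eq hF ⟨fun X hX v hv => ?_, fun X hX hv => ?_, ?_⟩).symm
  · cases hJ : J X with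
    | some w => exact hJ₁ X hX v (by simpa [icomp, hJ] using hv)
    | none => rw [hJ₂ X hX hJ]; exact hI₁ X hX v (by simpa [icomp, hJ] using hv)
  · cases hJ : J X with
    | some w => simp [icomp, hJ] at hv
    | none => rw [hJ₂ X hX hJ]; exact hI₂ X hX (by simpa [icomp, hJ] using hv)
  · rw [← intF_icomp]; exact hJ₃

end Semantics

section Satisfaction

variable {F : StructFuns S} {T : Set (Env S)} {A : Env S}

theorem satW_impl {φ ψ : Form S} :
    SatW (φ.impl ψ) F T A ↔ (SatW φ F T A → SatW ψ F T A) := by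
  simp only [Form.impl, SatW]
  tauto

theorem satW_ann_intEq (α : Form S) (I : Intervention S) (Y : S.Var) (y : S.Val Y) :
    SatW (.ann α (.int I (.eq Y y))) F T A ↔ SatW (α.impl (.int I (.eq Y y))) F T A := by
  rw [satW_impl]
  rfl

theorem satW_ann_neg (α φ : Form S) :
    SatW (.ann α (.neg φ)) F T A ↔ SatW (α.impl (.neg (.ann α φ))) F T A := by
  simp only [satW_impl, SatW]
  tauto

theorem satW_ann_conj (α φ ψ : Form S) :
    SatW (.ann α (.conj φ ψ)) F T A ↔ SatW (.conj (.ann α φ) (.ann α ψ)) F T A := by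
  simp only [SatW]
  tauto

theorem satW_ann_know (α φ : Form S) :
    SatW (.ann α (.know φ)) F T A ↔ SatW (α.impl (.know (α.impl (.ann α φ)))) F T A := by
  simp only [satW_impl, SatW, Set.mem_ofPred_eq]
  exact ⟨fun h hα B hB hαB _ => h hα B ⟨hB, hαB⟩,
    fun h hα B ⟨hB, hαB⟩ => h hα B hB hαB hαB⟩

theorem satW_ann_ann (α β φ : Form S) :
    SatW (.ann α (.ann β φ)) F T A ↔ SatW (.ann (.conj α (.ann α β)) φ) F T A := by
  have hT :
      {B | B ∈ {B | B ∈ T ∧ SatW α F T B} ∧ SatW β F {B | B ∈ T ∧ SatW α F T B} B} =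
      {B | B ∈ T ∧ SatW (.conj α (.ann α β)) F T B} := by
    ext B
    simp only [SatW, Set.mem_ofPred_eq]
    tauto
  simp only [SatW] at hT ⊢
  rw [hT]
  tauto

theorem satW_int_ann (I : Intervention S) (α φ : Form S) :
    SatW (.int I (.ann α φ)) F T A ↔ SatW (.ann (.int I α) (.int I φ)) F T A := by
  simp only [SatW]
  congr! 3
  exact (Set.image_inter_preimage _ _ _).symm

end Satisfaction

def ValidIff (φ ψ : Form S) : Prop :=
  ∀ (F : StructFuns S) (T : Set (Env S)), RecursiveF F → (∀ B ∈ T, Complies F B) →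
    ∀ A ∈ T, (SatW φ F T A ↔ SatW ψ F T A)

theorem ValidIff.of_satW_iff {φ ψ : Form S}
    (h : ∀ (F : StructFuns S) (T : Set (Env S)) (A : Env S), SatW φ F T A ↔ SatW ψ F T A) :
    ValidIff φ ψ :=
  fun F T _ _ A _ => h F T A

theorem ValidIff.ann_congr {α α' φ φ' : Form S} (hα : ValidIff α α')
    (hφ : ValidIff φ φ') :
    ValidIff (.ann α φ) (.ann α' φ') := by
  intro F T hF hT A hA
  have hTα : {B | B ∈ T ∧ SatW α F T B} = {B | B ∈ T ∧ SatW α' F T B} :=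
    Set.ext fun B => and_congr_right fun hB => hα F T hF hT B hB
  simp only [SatW, ← hTα, ← hα F T hF hT A hA]
  exact imp_congr_right fun hαA => hφ F _ hF (fun B hB => hT B hB.1) A ⟨hA, hαA⟩

theorem ValidIff.int_congr (I : Intervention S) {φ ψ : Form S} (h : ValidIff φ ψ) :
    ValidIff (.int I φ) (.int I ψ) := by
  rintro F T hF - A hA
  exact h _ _ (hF.intF I) (by rintro _ ⟨B, -, rfl⟩; exact complies_intVal hF B I) _
    ⟨A, hA, rfl⟩

theorem ValidIff.eq_empty (Y : S.Var) (y : S.Val Y) :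
    ValidIff (.eq Y y) (.int (iEmpty S) (.eq Y y)) := by
  intro F T hF hT A hA
  simp only [SatW, intVal_iEmpty hF (hT A hA)]

theorem ValidIff.int_know (I : Intervention S) (φ : Form S) :
    ValidIff (.int I (.know φ)) (.know (.int I φ)) :=
  .of_satW_iff fun F T A => by simp only [SatW, Set.forall_mem_image]

theorem ValidIff.int_int (I J : Intervention S) (φ : Form S) :
    ValidIff (.int I (.int J φ)) (.int (icomp I J) φ) := by
  intro F T hF _ A _
  simp only [SatW, Set.image_image, intVal_icomp hF, intF_icomp]

theorem isReductionCongruence_validIff : IsReductionCongruence (ValidIff (S := S)) where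
  refl _ _ _ _ _ _ _ := Iff.rfl
  symm h F T hF hT A hA := (h F T hF hT A hA).symm
  trans h₁ h₂ F T hF hT A hA := (h₁ F T hF hT A hA).trans (h₂ F T hF hT A hA)
  neg_congr h F T hF hT A hA := not_congr (h F T hF hT A hA)
  conj_congr h₁ h₂ F T hF hT A hA := and_congr (h₁ F T hF hT A hA) (h₂ F T hF hT A hA)
  know_congr h F T hF hT _ _ := forall₂_congr fun B hB => h F T hF hT B hB
  ann_congr := ValidIff.ann_congr
  int_congr := ValidIff.int_congr
  eq_empty := ValidIff.eq_empty
  int_neg _ _ := .of_satW_iff fun _ _ _ => Iff.rfl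
  int_conj _ _ _ := .of_satW_iff fun _ _ _ => Iff.rfl
  int_know := ValidIff.int_know
  int_int := ValidIff.int_int
  ann_intEq α I Y y := .of_satW_iff fun _ _ _ => satW_ann_intEq α I Y y
  ann_neg α φ := .of_satW_iff fun _ _ _ => satW_ann_neg α φ
  ann_conj α φ ψ := .of_satW_iff fun _ _ _ => satW_ann_conj α φ ψ
  ann_know α φ := .of_satW_iff fun _ _ _ => satW_ann_know α φ
  ann_ann α β φ := .of_satW_iff fun _ _ _ => satW_ann_ann α β φ
  int_ann I α φ := .of_satW_iff fun _ _ _ => satW_int_ann I α φ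

/-- Theorem: the translation tr₃ is well defined (it assigns to each L_PAKC
formula a unique translation) and, for every L_PAKC formula `χ`: (1) `tr₃(χ)` is
an L′_PAKC formula; (2) `χ ↔ tr₃(χ)` is provable in the system L_PAKC;
(3) `χ ↔ tr₃(χ)` is valid over epistemic (recursive) causal models. -/
theorem tr3_well_defined_and_correct (S : Sig) (χ : Form S) :
    (∃! χ' : Form S, Tr3 χ χ') ∧
      ∀ χ' : Form S, Tr3 χ χ' →
        IsPAKC' χ' ∧
        ThmPAKC (Form.iffF χ χ') ∧
        ∀ (F : StructFuns S) (T : Set (Env S)) (A : Env S),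
          RecursiveF F → T.Nonempty → (∀ B ∈ T, Complies F B) → A ∈ T →
          (SatW χ F T A ↔ SatW χ' F T A) := by
  refine ⟨⟨tr3 χ, tr3_spec χ, fun _ h => h.eq_tr3⟩, fun χ' h => ?_⟩
  obtain rfl := h.eq_tr3
  exact ⟨isPAKC'_tr3 χ, isReductionCongruence_thmPAKC_iffF.rel_tr3 χ,
    fun F T A hF _ hT hA => isReductionCongruence_validIff.rel_tr3 χ F T hF hT A hA⟩
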